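/- arXiv:1301.6325 — 2 statements merged into one kernel-verified Lean document; each statement's English description precedes it below -/
import Mathlib

section
/- Let F : ℝ² → GL₄(ℝ) be smooth and satisfy F_x = F·U and F_y = F·V, where U, V are the Wilczynski coefficient matrices, and define g₁ = F J₁ Fᵗ with J₁ the antidiagonal matrix with entries (1, 1, 1, 1). Then, with ⟨X, Y⟩ = Tr(g₁⁻¹ X g₁⁻¹ Y), one has ⟨∂_x g₁, ∂_x g₁⟩ = 16 P, ⟨∂_y g₁, ∂_y g₁⟩ = 16 Q, and ⟨∂_x g₁, ∂_y g₁⟩ = 8(k + ℓ) + 4 b c. In particular, ⟨∂_x g₁, ∂_x g₁⟩ and ⟨∂_y g₁, ∂_y g₁⟩ vanish identically (i.e., the first-order Gauss map g₁ is conformal for the conformal structure in which x and y are null coordinates) if and only if P = Q = 0 identically. -/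
open Matrix

noncomputable section

/-- Partial derivative in the `x`-direction of a scalar function on `ℝ²`. -/
def pdx (f : ℝ × ℝ → ℝ) (z : ℝ × ℝ) : ℝ := deriv (fun t => f (t, z.2)) z.1

/-- Partial derivative in the `y`-direction of a scalar function on `ℝ²`. -/
def pdy (f : ℝ × ℝ → ℝ) (z : ℝ × ℝ) : ℝ := deriv (fun t => f (z.1, t)) z.2

/-- `k = (bc − ∂_y(b_x/b))/2`. -/
def kF (b c : ℝ × ℝ → ℝ) (z : ℝ × ℝ) : ℝ :=
  (b z * c z - pdy (fun w => pdx b w / b w) z) / 2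

/-- `ℓ = (bc − ∂_y(c_x/c))/2`. -/
def lF (b c : ℝ × ℝ → ℝ) (z : ℝ × ℝ) : ℝ :=
  (b z * c z - pdy (fun w => pdx c w / c w) z) / 2

/-- `P = p + b_y/2 − c_{xx}/(2c) + c_x²/(4c²)`. -/
def PF (b c p : ℝ × ℝ → ℝ) (z : ℝ × ℝ) : ℝ :=
  p z + pdy b z / 2 - pdx (fun w => pdx c w) z / (2 * c z) + (pdx c z) ^ 2 / (4 * (c z) ^ 2)

/-- `Q = q + c_x/2 − b_{yy}/(2b) + b_y²/(4b²)`. -/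
def QF (b c q : ℝ × ℝ → ℝ) (z : ℝ × ℝ) : ℝ :=
  q z + pdx c z / 2 - pdy (fun w => pdy b w) z / (2 * b z) + (pdy b z) ^ 2 / (4 * (b z) ^ 2)

/-- The Wilczynski coefficient matrix `U`. -/
def Umat (b c p q : ℝ × ℝ → ℝ) (z : ℝ × ℝ) : Matrix (Fin 4) (Fin 4) ℝ :=
  !![pdx c z / (2 * c z), PF b c p z, kF b c z, b z * QF b c q z;
     1, -(pdx c z / (2 * c z)), 0, kF b c z;
     0, b z, pdx c z / (2 * c z), PF b c p z;
     0, 0, 1, -(pdx c z / (2 * c z))]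

/-- The Wilczynski coefficient matrix `V`. -/
def Vmat (b c p q : ℝ × ℝ → ℝ) (z : ℝ × ℝ) : Matrix (Fin 4) (Fin 4) ℝ :=
  !![pdy b z / (2 * b z), lF b c z, QF b c q z, c z * PF b c p z;
     0, pdy b z / (2 * b z), c z, QF b c q z;
     1, 0, -(pdy b z / (2 * b z)), lF b c z;
     0, 1, 0, -(pdy b z / (2 * b z))]

/-- Entrywise partial `x`-derivative of a matrix-valued function on `ℝ²`. -/
def pdxM (F : ℝ × ℝ → Matrix (Fin 4) (Fin 4) ℝ) (z : ℝ × ℝ) : Matrix (Fin 4) (Fin 4) ℝ :=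
  Matrix.of fun i j => pdx (fun w => F w i j) z

/-- Entrywise partial `y`-derivative of a matrix-valued function on `ℝ²`. -/
def pdyM (F : ℝ × ℝ → Matrix (Fin 4) (Fin 4) ℝ) (z : ℝ × ℝ) : Matrix (Fin 4) (Fin 4) ℝ :=
  Matrix.of fun i j => pdy (fun w => F w i j) z

/-- The antidiagonal matrix `J₁ = offdiag(1,1,1,1)`. -/
def J₁ : Matrix (Fin 4) (Fin 4) ℝ := !![0,0,0,1; 0,0,1,0; 0,1,0,0; 1,0,0,0]

set_option maxHeartbeats 1600000


lemma hasDerivAt_pdx (f : ℝ × ℝ → ℝ) (hf : ContDiff ℝ (⊤ : ℕ∞) f) (z : ℝ × ℝ) :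
    HasDerivAt (fun t => f (t, z.2)) (pdx f z) z.1 := by
  have h1 : DifferentiableAt ℝ (fun t : ℝ => f (t, z.2)) z.1 :=
    ((hf.differentiable (by simp)) (z.1, z.2)).comp z.1
      (differentiableAt_id.prodMk (differentiableAt_const _))
  exact h1.hasDerivAt

lemma hasDerivAt_pdy (f : ℝ × ℝ → ℝ) (hf : ContDiff ℝ (⊤ : ℕ∞) f) (z : ℝ × ℝ) :
    HasDerivAt (fun t => f (z.1, t)) (pdy f z) z.2 := by
  have h1 : DifferentiableAt ℝ (fun t : ℝ => f (z.1, t)) z.2 :=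
    ((hf.differentiable (by simp)) (z.1, z.2)).comp z.2
      ((differentiableAt_const _).prodMk differentiableAt_id)
  exact h1.hasDerivAt

lemma pdxM_gauss (F : ℝ × ℝ → Matrix (Fin 4) (Fin 4) ℝ)
    (hFsm : ∀ i j, ContDiff ℝ (⊤ : ℕ∞) fun z => F z i j) (z : ℝ × ℝ) :
    pdxM (fun w => F w * J₁ * (F w)ᵀ) z
      = pdxM F z * J₁ * (F z)ᵀ + F z * J₁ * (pdxM F z)ᵀ := by
  ext i j
  have hD : ∀ a b, HasDerivAt (fun t => F (t, z.2) a b) (pdxM F z a b) z.1 := fun a b =>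
    hasDerivAt_pdx (fun w => F w a b) (hFsm a b) z
  have key : HasDerivAt (fun t => (F (t, z.2) * J₁ * (F (t, z.2))ᵀ) i j)
      (∑ l, ((∑ k, pdxM F z i k * J₁ k l) * F z j l
         + (∑ k, F z i k * J₁ k l) * pdxM F z j l)) z.1 := by
    simp only [Matrix.mul_apply, Matrix.transpose_apply]
    exact HasDerivAt.fun_sum fun l _ =>
      (HasDerivAt.fun_sum fun k _ => (hD i k).mul_const (J₁ k l)).mul (hD j l)
  have h2 := key.deriv
  show pdx (fun w => (F w * J₁ * (F w)ᵀ) i j) z = _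
  rw [pdx]
  rw [h2]
  simp [Matrix.add_apply, Matrix.mul_apply, Matrix.transpose_apply, Finset.sum_add_distrib]

lemma pdyM_gauss (F : ℝ × ℝ → Matrix (Fin 4) (Fin 4) ℝ)
    (hFsm : ∀ i j, ContDiff ℝ (⊤ : ℕ∞) fun z => F z i j) (z : ℝ × ℝ) :
    pdyM (fun w => F w * J₁ * (F w)ᵀ) z
      = pdyM F z * J₁ * (F z)ᵀ + F z * J₁ * (pdyM F z)ᵀ := by
  ext i j
  have hD : ∀ a b, HasDerivAt (fun t => F (z.1, t) a b) (pdyM F z a b) z.2 := fun a b =>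
    hasDerivAt_pdy (fun w => F w a b) (hFsm a b) z
  have key : HasDerivAt (fun t => (F (z.1, t) * J₁ * (F (z.1, t))ᵀ) i j)
      (∑ l, ((∑ k, pdyM F z i k * J₁ k l) * F z j l
         + (∑ k, F z i k * J₁ k l) * pdyM F z j l)) z.2 := by
    simp only [Matrix.mul_apply, Matrix.transpose_apply]
    exact HasDerivAt.fun_sum fun l _ =>
      (HasDerivAt.fun_sum fun k _ => (hD i k).mul_const (J₁ k l)).mul (hD j l)
  have h2 := key.deriv
  show pdy (fun w => (F w * J₁ * (F w)ᵀ) i j) z = _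
  rw [pdy, h2]
  simp [Matrix.add_apply, Matrix.mul_apply, Matrix.transpose_apply, Finset.sum_add_distrib]



def Um (α P k b Q : ℝ) : Matrix (Fin 4) (Fin 4) ℝ :=
  !![α, P, k, b * Q; 1, -α, 0, k; 0, b, α, P; 0, 0, 1, -α]
def Vm (β l Q c P : ℝ) : Matrix (Fin 4) (Fin 4) ℝ :=
  !![β, l, Q, c * P; 0, β, c, Q; 1, 0, -β, l; 0, 1, 0, -β]

lemma trace_fin_four' (A : Matrix (Fin 4) (Fin 4) ℝ) :
    A.trace = A 0 0 + A 1 1 + A 2 2 + A 3 3 := by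
  simp [Matrix.trace, Fin.sum_univ_four]

lemma traceXX (α P k b Q : ℝ) :
    (J₁ * (Um α P k b Q * J₁ + J₁ * (Um α P k b Q)ᵀ)
      * (J₁ * (Um α P k b Q * J₁ + J₁ * (Um α P k b Q)ᵀ))).trace = 16 * P := by
  rw [trace_fin_four']
  simp only [Matrix.mul_apply, Matrix.add_apply, Matrix.transpose_apply, Fin.sum_univ_four,
    Um, J₁, Matrix.of_apply, Matrix.cons_val', Matrix.cons_val_zero, Matrix.cons_val_one,
    Matrix.head_cons, Matrix.cons_val_two, Matrix.cons_val_three, Matrix.head_fin_const,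
    Matrix.empty_val', Matrix.cons_val_fin_one, Matrix.vecHead, Matrix.vecTail,
    Function.comp_apply, Fin.succ_zero_eq_one, Fin.succ_one_eq_two]
  ring

lemma traceYY (β l Q c P : ℝ) :
    (J₁ * (Vm β l Q c P * J₁ + J₁ * (Vm β l Q c P)ᵀ)
      * (J₁ * (Vm β l Q c P * J₁ + J₁ * (Vm β l Q c P)ᵀ))).trace = 16 * Q := by
  rw [trace_fin_four']
  simp only [Matrix.mul_apply, Matrix.add_apply, Matrix.transpose_apply, Fin.sum_univ_four,
    Vm, J₁, Matrix.of_apply, Matrix.cons_val', Matrix.cons_val_zero, Matrix.cons_val_one,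
    Matrix.head_cons, Matrix.cons_val_two, Matrix.cons_val_three, Matrix.head_fin_const,
    Matrix.empty_val', Matrix.cons_val_fin_one, Matrix.vecHead, Matrix.vecTail,
    Function.comp_apply, Fin.succ_zero_eq_one, Fin.succ_one_eq_two]
  ring

lemma traceXY (α P k b Q β l c : ℝ) :
    (J₁ * (Um α P k b Q * J₁ + J₁ * (Um α P k b Q)ᵀ)
      * (J₁ * (Vm β l Q c P * J₁ + J₁ * (Vm β l Q c P)ᵀ))).trace
      = 8 * (k + l) + 4 * (b * c) := by
  rw [trace_fin_four']
  simp only [Matrix.mul_apply, Matrix.add_apply, Matrix.transpose_apply, Fin.sum_univ_four,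
    Um, Vm, J₁, Matrix.of_apply, Matrix.cons_val', Matrix.cons_val_zero, Matrix.cons_val_one,
    Matrix.head_cons, Matrix.cons_val_two, Matrix.cons_val_three, Matrix.head_fin_const,
    Matrix.empty_val', Matrix.cons_val_fin_one, Matrix.vecHead, Matrix.vecTail,
    Function.comp_apply, Fin.succ_zero_eq_one, Fin.succ_one_eq_two]
  ring

lemma hJJ : J₁ * J₁ = 1 := by
  ext i j
  fin_cases i <;> fin_cases j <;>
    simp [J₁, Matrix.mul_apply, Fin.sum_univ_four, Matrix.one_apply, Matrix.vecHead, Matrix.vecTail]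

lemma trace_conj (F : Matrix (Fin 4) (Fin 4) ℝ) (hF : IsUnit F.det)
    (X Y : Matrix (Fin 4) (Fin 4) ℝ) :
    ((Fᵀ)⁻¹ * J₁ * F⁻¹ * (F * X * Fᵀ) * ((Fᵀ)⁻¹ * J₁ * F⁻¹) * (F * Y * Fᵀ)).trace
      = (J₁ * X * (J₁ * Y)).trace := by
  have h1 : F⁻¹ * F = 1 := Matrix.nonsing_inv_mul F hF
  have h2 : Fᵀ * (Fᵀ)⁻¹ = 1 := Matrix.mul_nonsing_inv _ (by rwa [Matrix.det_transpose])
  have e1 : ∀ A : Matrix (Fin 4) (Fin 4) ℝ, F⁻¹ * (F * A) = A := fun A => by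
    rw [← Matrix.mul_assoc, h1, Matrix.one_mul]
  have e2 : ∀ A : Matrix (Fin 4) (Fin 4) ℝ, Fᵀ * ((Fᵀ)⁻¹ * A) = A := fun A => by
    rw [← Matrix.mul_assoc, h2, Matrix.one_mul]
  have : (Fᵀ)⁻¹ * J₁ * F⁻¹ * (F * X * Fᵀ) * ((Fᵀ)⁻¹ * J₁ * F⁻¹) * (F * Y * Fᵀ)
      = (Fᵀ)⁻¹ * (J₁ * (X * (J₁ * (Y * Fᵀ)))) := by
    simp only [Matrix.mul_assoc, e1, e2]
  rw [this, Matrix.trace_mul_comm]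
  simp only [Matrix.mul_assoc, e2]
  rw [Matrix.mul_nonsing_inv _ (by rwa [Matrix.det_transpose] : IsUnit (Fᵀ).det)]
  simp only [Matrix.mul_one, Matrix.mul_assoc]


/-- For the first-order Gauss map `g₁ = F J₁ Fᵗ` of a Wilczynski frame, with
`⟨X, Y⟩ = Tr(g₁⁻¹ X g₁⁻¹ Y)` one has `⟨∂_x g₁, ∂_x g₁⟩ = 16 P`,
`⟨∂_y g₁, ∂_y g₁⟩ = 16 Q` and `⟨∂_x g₁, ∂_y g₁⟩ = 8(k+ℓ) + 4bc`.  In particular `g₁`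
is conformal (both "null" pairings vanish identically) iff `P = Q = 0` identically,
i.e. iff the surface is a Demoulin surface. -/
theorem firstOrderGaussMap_conformal_iff_Demoulin
    (b c p q : ℝ × ℝ → ℝ)
    (hb : ContDiff ℝ (⊤ : ℕ∞) b) (hc : ContDiff ℝ (⊤ : ℕ∞) c)
    (hp : ContDiff ℝ (⊤ : ℕ∞) p) (hq : ContDiff ℝ (⊤ : ℕ∞) q)
    (hb0 : ∀ z, b z ≠ 0) (hc0 : ∀ z, c z ≠ 0)
    (F : ℝ × ℝ → Matrix (Fin 4) (Fin 4) ℝ)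
    (hFsm : ∀ i j, ContDiff ℝ (⊤ : ℕ∞) fun z => F z i j)
    (hFgl : ∀ z, IsUnit (F z).det)
    (hFx : ∀ z, pdxM F z = F z * Umat b c p q z)
    (hFy : ∀ z, pdyM F z = F z * Vmat b c p q z)
    (g₁ : ℝ × ℝ → Matrix (Fin 4) (Fin 4) ℝ)
    (hg₁ : g₁ = fun z => F z * J₁ * (F z)ᵀ) :
    (∀ z, ((g₁ z)⁻¹ * pdxM g₁ z * (g₁ z)⁻¹ * pdxM g₁ z).trace = 16 * PF b c p z ∧
          ((g₁ z)⁻¹ * pdyM g₁ z * (g₁ z)⁻¹ * pdyM g₁ z).trace = 16 * QF b c q z ∧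
          ((g₁ z)⁻¹ * pdxM g₁ z * (g₁ z)⁻¹ * pdyM g₁ z).trace
            = 8 * (kF b c z + lF b c z) + 4 * (b z * c z)) ∧
    ((∀ z, ((g₁ z)⁻¹ * pdxM g₁ z * (g₁ z)⁻¹ * pdxM g₁ z).trace = 0 ∧
           ((g₁ z)⁻¹ * pdyM g₁ z * (g₁ z)⁻¹ * pdyM g₁ z).trace = 0)
      ↔ (∀ z, PF b c p z = 0 ∧ QF b c q z = 0)) := by
  have hgx : ∀ z, pdxM (fun w => F w * J₁ * (F w)ᵀ) z
      = F z * (Umat b c p q z * J₁ + J₁ * (Umat b c p q z)ᵀ) * (F z)ᵀ := by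
    intro z
    rw [pdxM_gauss F hFsm z, hFx z]
    simp only [Matrix.transpose_mul, Matrix.mul_add, Matrix.add_mul, Matrix.mul_assoc]
  have hgy : ∀ z, pdyM (fun w => F w * J₁ * (F w)ᵀ) z
      = F z * (Vmat b c p q z * J₁ + J₁ * (Vmat b c p q z)ᵀ) * (F z)ᵀ := by
    intro z
    rw [pdyM_gauss F hFsm z, hFy z]
    simp only [Matrix.transpose_mul, Matrix.mul_add, Matrix.add_mul, Matrix.mul_assoc]
  have hginv : ∀ z, (F z * J₁ * (F z)ᵀ)⁻¹ = ((F z)ᵀ)⁻¹ * J₁ * (F z)⁻¹ := by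
    intro z
    rw [Matrix.mul_inv_rev, Matrix.mul_inv_rev, Matrix.inv_eq_left_inv hJJ,
      ← Matrix.mul_assoc]
  have hUm : ∀ z, Umat b c p q z
      = Um (pdx c z / (2 * c z)) (PF b c p z) (kF b c z) (b z) (QF b c q z) := fun z => rfl
  have hVm : ∀ z, Vmat b c p q z
      = Vm (pdy b z / (2 * b z)) (lF b c z) (QF b c q z) (c z) (PF b c p z) := fun z => rfl
  have hmain : ∀ z, ((g₁ z)⁻¹ * pdxM g₁ z * (g₁ z)⁻¹ * pdxM g₁ z).trace = 16 * PF b c p z ∧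
      ((g₁ z)⁻¹ * pdyM g₁ z * (g₁ z)⁻¹ * pdyM g₁ z).trace = 16 * QF b c q z ∧
      ((g₁ z)⁻¹ * pdxM g₁ z * (g₁ z)⁻¹ * pdyM g₁ z).trace
        = 8 * (kF b c z + lF b c z) + 4 * (b z * c z) := by
    intro z
    have ex : pdxM g₁ z
        = F z * (Umat b c p q z * J₁ + J₁ * (Umat b c p q z)ᵀ) * (F z)ᵀ := by
      rw [hg₁]; exact hgx z
    have ey : pdyM g₁ z
        = F z * (Vmat b c p q z * J₁ + J₁ * (Vmat b c p q z)ᵀ) * (F z)ᵀ := by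
      rw [hg₁]; exact hgy z
    have ei : (g₁ z)⁻¹ = ((F z)ᵀ)⁻¹ * J₁ * (F z)⁻¹ := by
      rw [hg₁]; exact hginv z
    refine ⟨?_, ?_, ?_⟩
    · rw [ex, ei, trace_conj (F z) (hFgl z), hUm z]
      exact traceXX _ _ _ _ _
    · rw [ey, ei, trace_conj (F z) (hFgl z), hVm z]
      exact traceYY _ _ _ _ _
    · rw [ex, ey, ei, trace_conj (F z) (hFgl z), hUm z, hVm z]
      exact traceXY _ _ _ _ _ _ _ _
  refine ⟨hmain, ?_, ?_⟩
  · intro h z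
    obtain ⟨h1, h2, -⟩ := hmain z
    obtain ⟨e1, e2⟩ := h z
    rw [e1] at h1
    rw [e2] at h2
    constructor <;> linarith
  · intro h z
    rw [(hmain z).1, (hmain z).2.1, (h z).1, (h z).2]
    norm_num
end
end

section
/- The zero-curvature condition ∂_y U^λ − ∂_x V^λ + V^λ·U^λ − U^λ·V^λ = 0 holds on ℝ² for every λ ∈ ℝ with λ ≠ 0 if and only if the following equations hold identically: Q_x = 0, P_y = 0, k_y + k (b_y/b) = 0, ℓ_x + ℓ (c_x/c) = 0, b Q_y + 2 b_y Q = 0, and c P_x + 2 c_x P = 0. -/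
open Matrix

noncomputable section

/-- The loop-parameter family `U^λ` associated to the first-order Gauss map. -/
def ULam (b c p q : ℝ × ℝ → ℝ) (lam : ℝ) (z : ℝ × ℝ) : Matrix (Fin 4) (Fin 4) ℝ :=
  !![pdx c z / (2 * c z), lam⁻¹ * PF b c p z, lam⁻¹ * kF b c z, lam⁻¹ * (b z * QF b c q z);
     lam⁻¹, -(pdx c z / (2 * c z)), 0, lam⁻¹ * kF b c z;
     0, lam⁻¹ * b z, pdx c z / (2 * c z), lam⁻¹ * PF b c p z;
     0, 0, lam⁻¹, -(pdx c z / (2 * c z))]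

/-- The loop-parameter family `V^λ` associated to the first-order Gauss map. -/
def VLam (b c p q : ℝ × ℝ → ℝ) (lam : ℝ) (z : ℝ × ℝ) : Matrix (Fin 4) (Fin 4) ℝ :=
  !![pdy b z / (2 * b z), lam * lF b c z, lam * QF b c q z, lam * (c z * PF b c p z);
     0, pdy b z / (2 * b z), lam * c z, lam * QF b c q z;
     lam, 0, -(pdy b z / (2 * b z)), lam * lF b c z;
     0, lam, 0, -(pdy b z / (2 * b z))]

section Helpers

variable {f g : ℝ × ℝ → ℝ} {z : ℝ × ℝ}

lemma hasDerivAt_lineX (f : ℝ × ℝ → ℝ) (z : ℝ × ℝ) (hf : DifferentiableAt ℝ f z) :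
    HasDerivAt (fun t => f (t, z.2)) (fderiv ℝ f z (1, 0)) z.1 := by
  have h1 : HasDerivAt (fun t : ℝ => (t, z.2)) ((1 : ℝ), (0 : ℝ)) z.1 :=
    (hasDerivAt_id z.1).prodMk (hasDerivAt_const z.1 z.2)
  have := hf.hasFDerivAt.comp_hasDerivAt z.1 h1
  simpa [Function.comp_def] using this

lemma hasDerivAt_lineY (f : ℝ × ℝ → ℝ) (z : ℝ × ℝ) (hf : DifferentiableAt ℝ f z) :
    HasDerivAt (fun t => f (z.1, t)) (fderiv ℝ f z (0, 1)) z.2 := by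
  have h1 : HasDerivAt (fun t : ℝ => (z.1, t)) ((0 : ℝ), (1 : ℝ)) z.2 :=
    (hasDerivAt_const z.2 z.1).prodMk (hasDerivAt_id z.2)
  have := hf.hasFDerivAt.comp_hasDerivAt z.2 h1
  simpa [Function.comp_def] using this

lemma pdx_eq (f : ℝ × ℝ → ℝ) (z : ℝ × ℝ) (hf : DifferentiableAt ℝ f z) :
    pdx f z = fderiv ℝ f z (1, 0) := (hasDerivAt_lineX f z hf).deriv

lemma pdy_eq (f : ℝ × ℝ → ℝ) (z : ℝ × ℝ) (hf : DifferentiableAt ℝ f z) :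
    pdy f z = fderiv ℝ f z (0, 1) := (hasDerivAt_lineY f z hf).deriv

lemma contDiff_pdx (f : ℝ × ℝ → ℝ) (hf : ContDiff ℝ (⊤ : ℕ∞) f) :
    ContDiff ℝ (⊤ : ℕ∞) (pdx f) := by
  have : pdx f = fun z => fderiv ℝ f z (1, 0) := by
    funext z; exact pdx_eq f z (hf.differentiable (by simp) z)
  rw [this]
  exact (hf.fderiv_right (mod_cast le_top)).clm_apply contDiff_const

lemma contDiff_pdy (f : ℝ × ℝ → ℝ) (hf : ContDiff ℝ (⊤ : ℕ∞) f) :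
    ContDiff ℝ (⊤ : ℕ∞) (pdy f) := by
  have : pdy f = fun z => fderiv ℝ f z (0, 1) := by
    funext z; exact pdy_eq f z (hf.differentiable (by simp) z)
  rw [this]
  exact (hf.fderiv_right (mod_cast le_top)).clm_apply contDiff_const

lemma pdx_pdy (f : ℝ × ℝ → ℝ) (hf : ContDiff ℝ (⊤ : ℕ∞) f) (z : ℝ × ℝ) :
    pdx (pdy f) z = pdy (pdx f) z := by
  have hdf : ContDiff ℝ (⊤ : ℕ∞) (fderiv ℝ f) := hf.fderiv_right (mod_cast le_top)
  have hpx : pdx f = fun z => fderiv ℝ f z (1, 0) := by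
    funext z; exact pdx_eq f z (hf.differentiable (by simp) z)
  have hpy : pdy f = fun z => fderiv ℝ f z (0, 1) := by
    funext z; exact pdy_eq f z (hf.differentiable (by simp) z)
  have hsym := second_derivative_symmetric
    (f' := fderiv ℝ f) (f'' := fderiv ℝ (fderiv ℝ f) z)
    (fun y => (hf.differentiable (by simp) y).hasFDerivAt)
    ((hdf.differentiable (by simp) z).hasFDerivAt)
  have e1 : pdx (pdy f) z = fderiv ℝ (fderiv ℝ f) z (1, 0) (0, 1) := by
    rw [hpy, pdx_eq _ _ ((hdf.clm_apply contDiff_const).differentiable (by simp) z)]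
    rw [fderiv_clm_apply (hdf.differentiable (by simp) z) (differentiableAt_const _)]
    simp
  have e2 : pdy (pdx f) z = fderiv ℝ (fderiv ℝ f) z (0, 1) (1, 0) := by
    rw [hpx, pdy_eq _ _ ((hdf.clm_apply contDiff_const).differentiable (by simp) z)]
    rw [fderiv_clm_apply (hdf.differentiable (by simp) z) (differentiableAt_const _)]
    simp
  rw [e1, e2, hsym]

lemma diffLineX (hf : ContDiff ℝ (⊤ : ℕ∞) f) (z : ℝ × ℝ) :
    DifferentiableAt ℝ (fun t => f (t, z.2)) z.1 :=
  (hasDerivAt_lineX f z (hf.differentiable (by simp) z)).differentiableAt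

lemma diffLineY (hf : ContDiff ℝ (⊤ : ℕ∞) f) (z : ℝ × ℝ) :
    DifferentiableAt ℝ (fun t => f (z.1, t)) z.2 :=
  (hasDerivAt_lineY f z (hf.differentiable (by simp) z)).differentiableAt

lemma pdx_const (a : ℝ) (z : ℝ × ℝ) : pdx (fun _ => a) z = 0 := by
  simp [pdx]

lemma pdy_const (a : ℝ) (z : ℝ × ℝ) : pdy (fun _ => a) z = 0 := by
  simp [pdy]

lemma pdx_const_mul (a : ℝ) (f : ℝ × ℝ → ℝ) (z : ℝ × ℝ) :
    pdx (fun w => a * f w) z = a * pdx f z := deriv_const_mul_field a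

lemma pdy_const_mul (a : ℝ) (f : ℝ × ℝ → ℝ) (z : ℝ × ℝ) :
    pdy (fun w => a * f w) z = a * pdy f z := deriv_const_mul_field a

lemma pdx_neg (f : ℝ × ℝ → ℝ) (z : ℝ × ℝ) :
    pdx (fun w => -f w) z = -pdx f z := deriv.neg

lemma pdy_neg (f : ℝ × ℝ → ℝ) (z : ℝ × ℝ) :
    pdy (fun w => -f w) z = -pdy f z := deriv.neg

lemma pdx_mul (hf : ContDiff ℝ (⊤ : ℕ∞) f) (hg : ContDiff ℝ (⊤ : ℕ∞) g) (z : ℝ × ℝ) :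
    pdx (fun w => f w * g w) z = pdx f z * g z + f z * pdx g z :=
  deriv_mul (diffLineX hf z) (diffLineX hg z)

lemma pdy_mul (hf : ContDiff ℝ (⊤ : ℕ∞) f) (hg : ContDiff ℝ (⊤ : ℕ∞) g) (z : ℝ × ℝ) :
    pdy (fun w => f w * g w) z = pdy f z * g z + f z * pdy g z :=
  deriv_mul (diffLineY hf z) (diffLineY hg z)

lemma pdx_div (hf : ContDiff ℝ (⊤ : ℕ∞) f) (hg : ContDiff ℝ (⊤ : ℕ∞) g) (z : ℝ × ℝ)
    (hz : g z ≠ 0) :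
    pdx (fun w => f w / g w) z = (pdx f z * g z - f z * pdx g z) / g z ^ 2 :=
  deriv_div (diffLineX hf z) (diffLineX hg z) hz

lemma pdy_div (hf : ContDiff ℝ (⊤ : ℕ∞) f) (hg : ContDiff ℝ (⊤ : ℕ∞) g) (z : ℝ × ℝ)
    (hz : g z ≠ 0) :
    pdy (fun w => f w / g w) z = (pdy f z * g z - f z * pdy g z) / g z ^ 2 :=
  deriv_div (diffLineY hf z) (diffLineY hg z) hz

end Helpers

section Master

variable {b c p q : ℝ × ℝ → ℝ}

lemma pdyM_ULam
    (hb : ContDiff ℝ (⊤ : ℕ∞) b) (hc : ContDiff ℝ (⊤ : ℕ∞) c)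
    (hq : ContDiff ℝ (⊤ : ℕ∞) q)
    (hb0 : ∀ z, b z ≠ 0) (hc0 : ∀ z, c z ≠ 0) (lam : ℝ) (z : ℝ × ℝ) :
    pdyM (ULam b c p q lam) z
    = !![b z * c z / 2 - lF b c z, lam⁻¹ * pdy (PF b c p) z, lam⁻¹ * pdy (kF b c) z,
          lam⁻¹ * (pdy b z * QF b c q z + b z * pdy (QF b c q) z);
        0, -(b z * c z / 2 - lF b c z), 0, lam⁻¹ * pdy (kF b c) z;
        0, lam⁻¹ * pdy b z, b z * c z / 2 - lF b c z, lam⁻¹ * pdy (PF b c p) z;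
        0, 0, 0, -(b z * c z / 2 - lF b c z)] := by
  have hbx := contDiff_pdx b hb
  have hby := contDiff_pdy b hb
  have hcx := contDiff_pdx c hc
  have hQ : ContDiff ℝ (⊤ : ℕ∞) (QF b c q) := by
    unfold QF
    exact ((hq.add (hcx.div contDiff_const (fun _ => two_ne_zero))).sub
      ((contDiff_pdy _ hby).div (contDiff_const.mul hb)
        (fun w => mul_ne_zero two_ne_zero (hb0 w)))).add
      ((hby.pow 2).div (contDiff_const.mul (hb.pow 2))
        (fun w => mul_ne_zero four_ne_zero (pow_ne_zero 2 (hb0 w))))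
  have t1 : pdy (fun w => pdx c w / (2 * c w)) z = b z * c z / 2 - lF b c z := by
    have e1 : pdy (fun w => pdx c w / (2 * c w)) z
        = (pdy (pdx c) z * (2 * c z) - pdx c z * (2 * pdy c z)) / (2 * c z) ^ 2 := by
      rw [pdy_div hcx (contDiff_const.mul hc) z (mul_ne_zero two_ne_zero (hc0 z)),
        pdy_const_mul]
    have e2 : pdy (fun w => pdx c w / c w) z
        = (pdy (pdx c) z * c z - pdx c z * pdy c z) / c z ^ 2 :=
      pdy_div hcx hc z (hc0 z)
    simp only [lF, e2]
    rw [e1]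
    have := hc0 z
    field_simp
    ring
  have t3 : pdy (fun w => lam⁻¹ * (b w * QF b c q w)) z
      = lam⁻¹ * (pdy b z * QF b c q z + b z * pdy (QF b c q) z) := by
    rw [pdy_const_mul, pdy_mul hb hQ]
  ext i j
  fin_cases i <;> fin_cases j <;>
    simp [pdyM, ULam, Matrix.vecHead, Matrix.vecTail, t1, t3, pdy_const_mul, pdy_neg, pdy_const]

lemma pdxM_VLam
    (hb : ContDiff ℝ (⊤ : ℕ∞) b) (hc : ContDiff ℝ (⊤ : ℕ∞) c)
    (hp : ContDiff ℝ (⊤ : ℕ∞) p)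
    (hb0 : ∀ z, b z ≠ 0) (hc0 : ∀ z, c z ≠ 0) (lam : ℝ) (z : ℝ × ℝ) :
    pdxM (VLam b c p q lam) z
    = !![b z * c z / 2 - kF b c z, lam * pdx (lF b c) z, lam * pdx (QF b c q) z,
          lam * (pdx c z * PF b c p z + c z * pdx (PF b c p) z);
        0, b z * c z / 2 - kF b c z, lam * pdx c z, lam * pdx (QF b c q) z;
        0, 0, -(b z * c z / 2 - kF b c z), lam * pdx (lF b c) z;
        0, 0, 0, -(b z * c z / 2 - kF b c z)] := by
  have hbx := contDiff_pdx b hb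
  have hby := contDiff_pdy b hb
  have hcx := contDiff_pdx c hc
  have hP : ContDiff ℝ (⊤ : ℕ∞) (PF b c p) := by
    unfold PF
    exact ((hp.add (hby.div contDiff_const (fun _ => two_ne_zero))).sub
      ((contDiff_pdx _ hcx).div (contDiff_const.mul hc)
        (fun w => mul_ne_zero two_ne_zero (hc0 w)))).add
      ((hcx.pow 2).div (contDiff_const.mul (hc.pow 2))
        (fun w => mul_ne_zero four_ne_zero (pow_ne_zero 2 (hc0 w))))
  have t2 : pdx (fun w => pdy b w / (2 * b w)) z = b z * c z / 2 - kF b c z := by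
    have e1 : pdx (fun w => pdy b w / (2 * b w)) z
        = (pdx (pdy b) z * (2 * b z) - pdy b z * (2 * pdx b z)) / (2 * b z) ^ 2 := by
      rw [pdx_div hby (contDiff_const.mul hb) z (mul_ne_zero two_ne_zero (hb0 z)),
        pdx_const_mul]
    have e2 : pdy (fun w => pdx b w / b w) z
        = (pdy (pdx b) z * b z - pdx b z * pdy b z) / b z ^ 2 :=
      pdy_div hbx hb z (hb0 z)
    simp only [kF, e2]
    rw [e1, pdx_pdy b hb z]
    have := hb0 z
    field_simp
    ring
  have t4 : pdx (fun w => lam * (c w * PF b c p w)) z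
      = lam * (pdx c z * PF b c p z + c z * pdx (PF b c p) z) := by
    rw [pdx_const_mul, pdx_mul hc hP]
  ext i j
  fin_cases i <;> fin_cases j <;>
    simp [pdxM, VLam, Matrix.vecHead, Matrix.vecTail, t2, t4, pdx_const_mul, pdx_neg, pdx_const]


set_option maxHeartbeats 2000000 in
lemma mul_VU (b c p q : ℝ × ℝ → ℝ) (lam : ℝ) (hlam : lam ≠ 0) (z : ℝ × ℝ)
    (hbz : b z ≠ 0) (hcz : c z ≠ 0) :
    VLam b c p q lam z * ULam b c p q lam z
    = !![(pdx c z / (2 * c z)) * (pdy b z / (2 * b z)) + lF b c z, (-1) * (pdx c z / (2 * c z)) * lam * lF b c z + (pdy b z / (2 * b z)) * lam⁻¹ * PF b c p z + QF b c q z * b z, (pdx c z / (2 * c z)) * lam * QF b c q z + (pdy b z / (2 * b z)) * lam⁻¹ * kF b c z + PF b c p z * c z, (-1) * (pdx c z / (2 * c z)) * lam * PF b c p z * c z + (pdy b z / (2 * b z)) * lam⁻¹ * QF b c q z * b z + PF b c p z * QF b c q z + kF b c z * lF b c z;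
     (pdy b z / (2 * b z)) * lam⁻¹, (-1) * (pdx c z / (2 * c z)) * (pdy b z / (2 * b z)) + b z * c z, (pdx c z / (2 * c z)) * lam * c z + QF b c q z, (-1) * (pdx c z / (2 * c z)) * lam * QF b c q z + (pdy b z / (2 * b z)) * lam⁻¹ * kF b c z + PF b c p z * c z;
     (pdx c z / (2 * c z)) * lam, (-1) * (pdy b z / (2 * b z)) * lam⁻¹ * b z + PF b c p z, (-1) * (pdx c z / (2 * c z)) * (pdy b z / (2 * b z)) + kF b c z + lF b c z, (-1) * (pdx c z / (2 * c z)) * lam * lF b c z + (-1) * (pdy b z / (2 * b z)) * lam⁻¹ * PF b c p z + QF b c q z * b z;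
     1, (-1) * (pdx c z / (2 * c z)) * lam, (-1) * (pdy b z / (2 * b z)) * lam⁻¹, (pdx c z / (2 * c z)) * (pdy b z / (2 * b z)) + kF b c z] := by
  ext i j
  fin_cases i <;> fin_cases j <;>
    simp [ULam, VLam, Matrix.mul_apply, Fin.sum_univ_four, Matrix.vecHead, Matrix.vecTail]
  all_goals try tauto
  all_goals try field_simp
  all_goals try ring
  all_goals tauto

set_option maxHeartbeats 2000000 in
lemma mul_UV (b c p q : ℝ × ℝ → ℝ) (lam : ℝ) (hlam : lam ≠ 0) (z : ℝ × ℝ)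
    (hbz : b z ≠ 0) (hcz : c z ≠ 0) :
    ULam b c p q lam z * VLam b c p q lam z
    = !![(pdx c z / (2 * c z)) * (pdy b z / (2 * b z)) + kF b c z, (pdx c z / (2 * c z)) * lam * lF b c z + (pdy b z / (2 * b z)) * lam⁻¹ * PF b c p z + QF b c q z * b z, (pdx c z / (2 * c z)) * lam * QF b c q z + (-1) * (pdy b z / (2 * b z)) * lam⁻¹ * kF b c z + PF b c p z * c z, (pdx c z / (2 * c z)) * lam * PF b c p z * c z + (-1) * (pdy b z / (2 * b z)) * lam⁻¹ * QF b c q z * b z + PF b c p z * QF b c q z + kF b c z * lF b c z;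
     (pdy b z / (2 * b z)) * lam⁻¹, (-1) * (pdx c z / (2 * c z)) * (pdy b z / (2 * b z)) + kF b c z + lF b c z, (-1) * (pdx c z / (2 * c z)) * lam * c z + QF b c q z, (-1) * (pdx c z / (2 * c z)) * lam * QF b c q z + (-1) * (pdy b z / (2 * b z)) * lam⁻¹ * kF b c z + PF b c p z * c z;
     (pdx c z / (2 * c z)) * lam, (pdy b z / (2 * b z)) * lam⁻¹ * b z + PF b c p z, (-1) * (pdx c z / (2 * c z)) * (pdy b z / (2 * b z)) + b z * c z, (pdx c z / (2 * c z)) * lam * lF b c z + (-1) * (pdy b z / (2 * b z)) * lam⁻¹ * PF b c p z + QF b c q z * b z;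
     1, (-1) * (pdx c z / (2 * c z)) * lam, (-1) * (pdy b z / (2 * b z)) * lam⁻¹, (pdx c z / (2 * c z)) * (pdy b z / (2 * b z)) + lF b c z] := by
  ext i j
  fin_cases i <;> fin_cases j <;>
    simp [ULam, VLam, Matrix.mul_apply, Fin.sum_univ_four, Matrix.vecHead, Matrix.vecTail]
  all_goals try tauto
  all_goals try field_simp
  all_goals try ring
  all_goals tauto

set_option maxHeartbeats 2000000 in
lemma zc_master (b c p q : ℝ × ℝ → ℝ)
    (hb : ContDiff ℝ (⊤ : ℕ∞) b) (hc : ContDiff ℝ (⊤ : ℕ∞) c)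
    (hp : ContDiff ℝ (⊤ : ℕ∞) p) (hq : ContDiff ℝ (⊤ : ℕ∞) q)
    (hb0 : ∀ z, b z ≠ 0) (hc0 : ∀ z, c z ≠ 0)
    (lam : ℝ) (hlam : lam ≠ 0) (z : ℝ × ℝ) :
    pdyM (ULam b c p q lam) z - pdxM (VLam b c p q lam) z
      + VLam b c p q lam z * ULam b c p q lam z
      - ULam b c p q lam z * VLam b c p q lam z
    = !![0,
         lam⁻¹ * pdy (PF b c p) z - lam * (pdx (lF b c) z + lF b c z * (pdx c z / c z)),
         lam⁻¹ * (pdy (kF b c) z + kF b c z * (pdy b z / b z)) - lam * pdx (QF b c q) z,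
         lam⁻¹ * (b z * pdy (QF b c q) z + 2 * pdy b z * QF b c q z)
           - lam * (c z * pdx (PF b c p) z + 2 * pdx c z * PF b c p z);
         0, 0, 0, lam⁻¹ * (pdy (kF b c) z + kF b c z * (pdy b z / b z)) - lam * pdx (QF b c q) z;
         0, 0, 0, lam⁻¹ * pdy (PF b c p) z - lam * (pdx (lF b c) z + lF b c z * (pdx c z / c z));
         0, 0, 0, 0] := by
  rw [pdyM_ULam hb hc hq hb0 hc0 lam z, pdxM_VLam hb hc hp hb0 hc0 lam z,
    mul_VU b c p q lam hlam z (hb0 z) (hc0 z), mul_UV b c p q lam hlam z (hb0 z) (hc0 z)]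
  have hbz := hb0 z
  have hcz := hc0 z
  ext i j
  fin_cases i <;> fin_cases j <;>
    simp [Matrix.sub_apply, Matrix.add_apply, Matrix.vecHead, Matrix.vecTail]
  all_goals try tauto
  all_goals try field_simp
  all_goals try ring
  all_goals tauto

end Master
/-- The zero-curvature condition for `U^λ, V^λ` holds for every `λ ≠ 0` iff
`Q_x = 0`, `P_y = 0`, `k_y + k b_y/b = 0`, `ℓ_x + ℓ c_x/c = 0`,
`b Q_y + 2 b_y Q = 0` and `c P_x + 2 c_x P = 0` hold identically. -/
theorem loop_zero_curvature_iff
    (b c p q : ℝ × ℝ → ℝ)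
    (hb : ContDiff ℝ (⊤ : ℕ∞) b) (hc : ContDiff ℝ (⊤ : ℕ∞) c)
    (hp : ContDiff ℝ (⊤ : ℕ∞) p) (hq : ContDiff ℝ (⊤ : ℕ∞) q)
    (hb0 : ∀ z, b z ≠ 0) (hc0 : ∀ z, c z ≠ 0) :
    (∀ lam : ℝ, lam ≠ 0 → ∀ z,
        pdyM (ULam b c p q lam) z - pdxM (VLam b c p q lam) z
          + VLam b c p q lam z * ULam b c p q lam z
          - ULam b c p q lam z * VLam b c p q lam z = 0)
    ↔ (∀ z,
        pdx (QF b c q) z = 0 ∧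
        pdy (PF b c p) z = 0 ∧
        pdy (kF b c) z + kF b c z * (pdy b z / b z) = 0 ∧
        pdx (lF b c) z + lF b c z * (pdx c z / c z) = 0 ∧
        b z * pdy (QF b c q) z + 2 * pdy b z * QF b c q z = 0 ∧
        c z * pdx (PF b c p) z + 2 * pdx c z * PF b c p z = 0) := by
  constructor
  · intro h z
    have h1 := h 1 one_ne_zero z
    have h2 := h 2 two_ne_zero z
    rw [zc_master b c p q hb hc hp hq hb0 hc0 1 one_ne_zero z] at h1
    rw [zc_master b c p q hb hc hp hq hb0 hc0 2 two_ne_zero z] at h2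
    have a1 := Matrix.ext_iff.2 h1 0 1
    have a2 := Matrix.ext_iff.2 h1 0 2
    have a3 := Matrix.ext_iff.2 h1 0 3
    have b1 := Matrix.ext_iff.2 h2 0 1
    have b2 := Matrix.ext_iff.2 h2 0 2
    have b3 := Matrix.ext_iff.2 h2 0 3
    simp only [Matrix.cons_val', Matrix.cons_val_zero, Matrix.cons_val_one, Matrix.head_cons,
      Matrix.head_fin_const, Matrix.empty_val', Matrix.cons_val_fin_one, Matrix.of_apply,
      Matrix.cons_val_two, Matrix.tail_cons, Matrix.cons_val_three, Matrix.zero_apply]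
      at a1 a2 a3 b1 b2 b3
    norm_num at a1 a2 a3 b1 b2 b3
    refine ⟨by linarith, by linarith, by linarith, by linarith, by linarith, by linarith⟩
  · intro h lam hlam z
    rw [zc_master b c p q hb hc hp hq hb0 hc0 lam hlam z]
    obtain ⟨h1, h2, h3, h4, h5, h6⟩ := h z
    rw [h1, h2, h3, h4, h5, h6]
    ext i j
    fin_cases i <;> fin_cases j <;>
      simp [Matrix.vecHead, Matrix.vecTail]
end
end
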